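/- Corollary 3.4, equivalence (i) ⟺ (ii). Let r and N be positive integers and let λ, μ be partitions of length ≤ N with μ ⊆ λ. Then λ/μ is an r-decomposable skew partition if and only if there exist labelled abaci w ∈ Abc_N(μ) and w′ ∈ Abc_N(λ) and positions i_1 < i_2 < … < i_m such that w′ is obtained from w by a series of r-moves of beads from positions i_1, …, i_m. -/

import Mathlib

open MvPolynomial Finset Classical

noncomputable section

/-- A partition: an antitone finitely supported function `ℕ → ℕ`.
`l.part i` is the `(i+1)`-st part `λ_{i+1}` (0-based indexing). -/
def Ptn : Type := {f : ℕ →₀ ℕ // Antitone (f : ℕ → ℕ)}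

namespace Ptn

/-- `l.part i = λ_{i+1}` (0-based indexing of the parts). -/
def part (l : Ptn) (i : ℕ) : ℕ := l.1 i

/-- The size `|λ|`. -/
def size (l : Ptn) : ℕ := l.1.sum fun _ v => v

/-- `Sub m l` means `μ ⊆ λ` (containment of Young diagrams). -/
def Sub (m l : Ptn) : Prop := ∀ i, m.part i ≤ l.part i

/-- The Young diagram (0-based): box `(i,j)` corresponds to row `i+1`, column `j+1`. -/
def cells (l : Ptn) : Set (ℕ × ℕ) := {c | c.2 < l.part c.1}

/-- The Young diagram of the skew partition `λ/μ`. -/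
def skew (m l : Ptn) : Set (ℕ × ℕ) := l.cells \ m.cells

/-- The top `t(λ/μ)`: `0` if `λ = μ` and otherwise the least (1-based) `i` with `λ_i ≠ μ_i`. -/
def top (m l : Ptn) : ℕ := if m = l then 0 else sInf {i | m.part i ≠ l.part i} + 1

/-- The bottom `b(λ/μ)`: `0` if `λ = μ` and otherwise the greatest (1-based) `i` with `λ_i ≠ μ_i`. -/
def bot (m l : Ptn) : ℕ := if m = l then 0 else sSup {i | m.part i ≠ l.part i} + 1

end Ptn

/-- Two boxes are edge-adjacent (horizontally or vertically). -/
def Adjacent (c d : ℕ × ℕ) : Prop :=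
  (c.1 = d.1 ∧ (c.2 + 1 = d.2 ∨ d.2 + 1 = c.2)) ∨
  (c.2 = d.2 ∧ (c.1 + 1 = d.1 ∨ d.1 + 1 = c.1))

/-- A set of boxes is connected via edge-adjacency. -/
def ConnectedSet (S : Set (ℕ × ℕ)) : Prop :=
  ∀ c ∈ S, ∀ d ∈ S, Relation.ReflTransGen (fun x y => y ∈ S ∧ Adjacent x y) c d

/-- `λ/μ` is an `r`-border strip. -/
def IsBorderStrip (r : ℕ) (m l : Ptn) : Prop :=
  Ptn.Sub m l ∧ l.size = m.size + r ∧ ConnectedSet (Ptn.skew m l) ∧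
    ∀ c ∈ Ptn.skew m l, (c.1 + 1, c.2 + 1) ∉ Ptn.skew m l

/-- The sign `(-1)^(b(λ/μ) - t(λ/μ))` of a border strip `λ/μ`. -/
def stripSgn (m l : Ptn) : ℤ := (-1) ^ (Ptn.bot m l - Ptn.top m l)

/-- A chain `μ = γ⁽⁰⁾ ⊆ … ⊆ γ⁽ᵈ⁾ = λ` of `r`-border strips with non-increasing tops. -/
def RChain (r : ℕ) (m l : Ptn) (d : ℕ) (γ : ℕ → Ptn) : Prop :=
  γ 0 = m ∧ γ d = l ∧ (∀ i < d, IsBorderStrip r (γ i) (γ (i + 1))) ∧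
    ∀ i, i + 1 < d → Ptn.top (γ (i + 1)) (γ (i + 2)) ≤ Ptn.top (γ i) (γ (i + 1))

/-- `λ/μ` is `r`-decomposable. -/
def RDecomposable (r : ℕ) (m l : Ptn) : Prop := ∃ d γ, RChain r m l d γ

/-- `sgn_r(λ/μ)`: the product of the signs of the border strips in a decomposition chain,
or `0` if `λ/μ` is not `r`-decomposable. -/
def sgnr (r : ℕ) (m l : Ptn) : ℤ :=
  if h : RDecomposable r m l then
    ∏ i ∈ Finset.range h.choose,
      stripSgn (h.choose_spec.choose i) (h.choose_spec.choose (i + 1))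
  else 0

/-- The alternant `a_{λ+δ(N)} = det(x_i^{λ_j + N - j})`. -/
def altPoly (N : ℕ) (l : Ptn) : MvPolynomial (Fin N) ℤ :=
  Matrix.det (Matrix.of fun i j : Fin N =>
    (X i : MvPolynomial (Fin N) ℤ) ^ (l.part j + (N - 1 - (j : ℕ))))

/-- The compositions of `m` of length `N`. -/
def comps (N m : ℕ) : Finset (Fin N → ℕ) :=
  (Fintype.piFinset fun _ => Finset.range (m + 1)).filter fun β => ∑ i, β i = m

/-- The complete homogeneous symmetric polynomial `h_m` in `N` variables. -/
def hPoly (N m : ℕ) : MvPolynomial (Fin N) ℤ :=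
  ∑ β ∈ comps N m, ∏ i, X i ^ β i

/-- The power sum `p_r` in `N` variables. -/
def pPoly (N r : ℕ) : MvPolynomial (Fin N) ℤ :=
  ∑ i : Fin N, X i ^ r

/-- The plethysm `p_r ∘ h_m = Σ_{β ∈ Com_N(m)} x^{rβ}` in `N` variables. -/
def prhm (N r m : ℕ) : MvPolynomial (Fin N) ℤ :=
  ∑ β ∈ comps N m, ∏ i, X i ^ (r * β i)

/-- A labelled abacus with `N` beads: a sequence `w : ℕ → ℕ` whose nonzero entries are
precisely `1, …, N`, each occurring exactly once. -/
structure Abacus (N : ℕ) where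
  w : ℕ → ℕ
  w_le : ∀ i, w i ≤ N
  uniq : ∀ B : ℕ, 1 ≤ B → B ≤ N → ∃! i, w i = B

namespace Abacus

variable {N : ℕ}

/-- `a.pos B` is the position `w⁻¹(B+1)` of bead `B+1` (beads indexed by `Fin N`, 0-based:
`B : Fin N` stands for the bead labelled `B+1`). -/
def pos (a : Abacus N) (B : Fin N) : ℕ :=
  (a.uniq ((B : ℕ) + 1) (Nat.le_add_left 1 B) B.isLt).choose

lemma pos_spec (a : Abacus N) (B : Fin N) : a.w (a.pos B) = (B : ℕ) + 1 :=
  (a.uniq ((B : ℕ) + 1) (Nat.le_add_left 1 B) B.isLt).choose_spec.1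

lemma pos_injective (a : Abacus N) : Function.Injective a.pos := by
  intro B C h
  have hB := a.pos_spec B
  have hC := a.pos_spec C
  rw [h, hC] at hB
  exact Fin.ext (by omega)

/-- The support of a labelled abacus: the set of occupied positions. -/
def suppF (a : Abacus N) : Finset ℕ := Finset.image a.pos Finset.univ

lemma card_suppF (a : Abacus N) : a.suppF.card = N := by
  rw [suppF, Finset.card_image_of_injective _ a.pos_injective, Finset.card_univ,
    Fintype.card_fin]

/-- `a.iota t` is `ι_{t+1}(w)`, the `(t+1)`-st largest occupied position (`t : Fin N`, 0-based). -/
def iota (a : Abacus N) (t : Fin N) : ℕ :=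
  (Finset.sort a.suppF (· ≤ ·)).getD (N - 1 - (t : ℕ)) 0

lemma length_sort_suppF (a : Abacus N) : (Finset.sort a.suppF (· ≤ ·)).length = N := by
  rw [Finset.length_sort, a.card_suppF]

lemma iota_mem (a : Abacus N) (t : Fin N) : a.iota t ∈ a.suppF := by
  have hlt : N - 1 - (t : ℕ) < (Finset.sort a.suppF (· ≤ ·)).length := by
    rw [a.length_sort_suppF]
    have := t.isLt
    omega
  rw [iota, List.getD_eq_getElem _ _ hlt]
  exact (Finset.mem_sort (α := ℕ) (· ≤ ·)).mp (List.getElem_mem hlt)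

lemma iota_injective (a : Abacus N) : Function.Injective a.iota := by
  intro t t' h
  have hn : (Finset.sort a.suppF (· ≤ ·)).Nodup := Finset.sort_nodup _ _
  have h1 : N - 1 - (t : ℕ) < (Finset.sort a.suppF (· ≤ ·)).length := by
    rw [a.length_sort_suppF]; have := t.isLt; omega
  have h2 : N - 1 - (t' : ℕ) < (Finset.sort a.suppF (· ≤ ·)).length := by
    rw [a.length_sort_suppF]; have := t'.isLt; omega
  rw [iota, iota, List.getD_eq_getElem _ _ h1, List.getD_eq_getElem _ _ h2] at h
  have := (List.Nodup.getElem_inj_iff hn (hi := h1) (hj := h2)).mp h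
  have ht := t.isLt
  have ht' := t'.isLt
  exact Fin.ext (by omega)

lemma one_le_w_iota (a : Abacus N) (t : Fin N) : 1 ≤ a.w (a.iota t) := by
  obtain ⟨B, -, hB⟩ := Finset.mem_image.mp (a.iota_mem t)
  rw [← hB, a.pos_spec]
  omega

/-- The permutation `σ_w ∈ S_N` (on `Fin N`, 0-based): `σ_w(B) = w_{ι_{B+1}(w)}`. -/
def sigma (a : Abacus N) : Equiv.Perm (Fin N) :=
  Equiv.ofBijective
    (fun t => (⟨a.w (a.iota t) - 1, by
        have h1 := a.one_le_w_iota t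
        have h2 := a.w_le (a.iota t)
        omega⟩ : Fin N))
    (Finite.injective_iff_bijective.mp (by
      intro t t' h
      have h1 := a.one_le_w_iota t
      have h1' := a.one_le_w_iota t'
      have hv : a.w (a.iota t) = a.w (a.iota t') := by
        have := congrArg Fin.val h
        simp only at this
        omega
      have hu := a.uniq (a.w (a.iota t)) h1 (a.w_le _)
      obtain ⟨i, -, hi⟩ := hu
      have e1 := hi (a.iota t) rfl
      have e2 := hi (a.iota t') hv.symm
      exact a.iota_injective (e1.trans e2.symm)))

/-- The sign `sgn(w)` of a labelled abacus: the sign of `σ_w`. -/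
def sgn (a : Abacus N) : ℤ := Equiv.Perm.sign a.sigma

/-- The weight `wt(w) = ∏_{i ∈ supp(w)} x_{w_i}^i`: the variable `X B` is `x_{B+1}`. -/
def wt (a : Abacus N) : MvPolynomial (Fin N) ℤ :=
  ∏ B : Fin N, X B ^ a.pos B


end Abacus

namespace Abacus

variable {N : ℕ}

/-- `a.HasShape l` says that the shape `sh(w) = (ι_1(w) - (N-1), ι_2(w) - (N-2), …, ι_N(w))`
of the abacus equals the partition `l` (stated additively: `ι_{t+1}(w) = l_{t+1} + (N-1-t)`). -/
def HasShape (a : Abacus N) (l : Ptn) : Prop :=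
  (∀ t : Fin N, l.part t + (N - 1 - (t : ℕ)) = a.iota t) ∧ ∀ i, N ≤ i → l.part i = 0

end Abacus

/-- `IsRMove r a a' i`: the abacus `a'` is obtained from `a` by `r`-moving the bead
at position `i` (to position `i + r`). -/
def IsRMove {N : ℕ} (r : ℕ) (a a' : Abacus N) (i : ℕ) : Prop :=
  a.w i ≠ 0 ∧ a.w (i + r) = 0 ∧ a'.w i = 0 ∧ a'.w (i + r) = a.w i ∧
    ∀ j, j ≠ i → j ≠ i + r → a'.w j = a.w j

/-- `SeriesRMoves r m a a' idx`: the abacus `a'` is obtained from `a` by a series of `m`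
`r`-moves of beads from positions `idx 0 < idx 1 < … < idx (m-1)`. -/
def SeriesRMoves {N : ℕ} (r m : ℕ) (a a' : Abacus N) (idx : Fin m → ℕ) : Prop :=
  StrictMono idx ∧ ∃ v : Fin (m + 1) → Abacus N, v 0 = a ∧ v (Fin.last m) = a' ∧
    ∀ j : Fin m, IsRMove r (v j.castSucc) (v j.succ) (idx j)

/-- The set `K_N^{r,m}(μ,λ)`: sequences `(w⁽⁰⁾, …, w⁽ᵐ⁾)` of labelled abaci with `N` beads,
of shapes `μ` and `λ` at the two ends, where `w⁽ʲ⁾` is obtained from `w⁽ʲ⁻¹⁾` by `r`-moving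
a bead from position `i_j`, with `i_1 < i_2 < … < i_m`. -/
def KSet (N r m : ℕ) (mu lam : Ptn) (v : Fin (m + 1) → Abacus N) : Prop :=
  (v 0).HasShape mu ∧ (v (Fin.last m)).HasShape lam ∧
    ∃ idx : Fin m → ℕ, StrictMono idx ∧
      ∀ j : Fin m, IsRMove r (v j.castSucc) (v j.succ) (idx j)

/-- Bead `B+1` is left-`r`-mobile in `a`: its position is at least `r` and the position `r`
steps to the left is empty. -/
def IsLeftRMobile {N : ℕ} (a : Abacus N) (r : ℕ) (B : Fin N) : Prop :=
  r ≤ a.pos B ∧ a.w (a.pos B - r) = 0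

/-- `IsLeftRMove a r B a'`: the abacus `a'` is obtained from `a` by `r`-moving bead `B+1`
leftwards. -/
def IsLeftRMove {N : ℕ} (a : Abacus N) (r : ℕ) (B : Fin N) (a' : Abacus N) : Prop :=
  r ≤ a.pos B ∧ a'.w (a.pos B - r) = (B : ℕ) + 1 ∧ a'.w (a.pos B) = 0 ∧
    ∀ j, j ≠ a.pos B - r → j ≠ a.pos B → a'.w j = a.w j

/-! ### Auxiliary infrastructure -/

namespace Ptn

lemma part_mono (l : Ptn) : ∀ {i j : ℕ}, i ≤ j → l.part j ≤ l.part i :=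
  fun h => l.2 h

lemma ext' {p q : Ptn} (h : ∀ i, p.part i = q.part i) : p = q :=
  Subtype.ext (Finsupp.ext h)

lemma size_eq_sum {N : ℕ} (l : Ptn) (h : ∀ i, N ≤ i → l.part i = 0) :
    l.size = ∑ k ∈ Finset.range N, l.part k := by
  rw [Ptn.size]
  refine Finsupp.sum_of_support_subset _ ?_ _ (fun _ _ => rfl)
  intro x hx
  rw [Finsupp.mem_support_iff] at hx
  simp only [Finset.mem_range]
  by_contra h'
  exact hx (h x (le_of_not_gt h'))

lemma mem_skew {m l : Ptn} {x : ℕ × ℕ} :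
    x ∈ Ptn.skew m l ↔ m.part x.1 ≤ x.2 ∧ x.2 < l.part x.1 := by
  simp only [Ptn.skew, Ptn.cells, Set.mem_diff, Set.mem_setOf_eq, not_lt]
  tauto

end Ptn

namespace Abacus

variable {N : ℕ}

lemma mem_suppF_iff (a : Abacus N) (j : ℕ) : j ∈ a.suppF ↔ a.w j ≠ 0 := by
  constructor
  · intro hj
    obtain ⟨B, -, rfl⟩ := Finset.mem_image.mp hj
    rw [a.pos_spec]; omega
  · intro hj
    have h1 : 1 ≤ a.w j := Nat.one_le_iff_ne_zero.mpr hj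
    have h2 := a.w_le j
    refine Finset.mem_image.mpr ⟨⟨a.w j - 1, by omega⟩, Finset.mem_univ _, ?_⟩
    obtain ⟨i, hi, huniq⟩ := a.uniq (a.w j) h1 h2
    have hps := a.pos_spec ⟨a.w j - 1, by omega⟩
    have h3 : a.w (a.pos ⟨a.w j - 1, by omega⟩) = a.w j := by rw [hps]; simp; omega
    rw [huniq _ h3, huniq j rfl]

lemma iota_eq_emb (a : Abacus N) (t : Fin N) :
    a.iota t = a.suppF.orderEmbOfFin a.card_suppF ⟨N - 1 - t, by have := t.isLt; omega⟩ := by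
  have hlt : N - 1 - (t : ℕ) < (Finset.sort a.suppF (· ≤ ·)).length := by
    rw [a.length_sort_suppF]; have := t.isLt; omega
  rw [Abacus.iota, List.getD_eq_getElem _ _ hlt, Finset.orderEmbOfFin_apply]
  simp [Fin.getElem_fin]

lemma iota_strictAnti (a : Abacus N) : StrictAnti a.iota := by
  intro t t' h
  rw [iota_eq_emb, iota_eq_emb]
  apply (a.suppF.orderEmbOfFin a.card_suppF).strictMono
  have h1 := t.isLt; have h2 := t'.isLt
  have h3 : (t : ℕ) < (t' : ℕ) := h
  exact Fin.mk_lt_mk.mpr (by omega)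

lemma iota_anti (a : Abacus N) : Antitone a.iota := a.iota_strictAnti.antitone

lemma iota_eq_of_strictAnti (a : Abacus N) (f : Fin N → ℕ) (hf : StrictAnti f)
    (hmem : ∀ t, f t ∈ a.suppF) (t : Fin N) : a.iota t = f t := by
  set g : Fin N → ℕ := fun k => f ⟨N - 1 - k, by have := k.isLt; omega⟩ with hg
  have hgmono : StrictMono g := by
    intro k k' hk
    refine hf ?_
    have h1 := k.isLt; have h2 := k'.isLt
    have h3 : (k : ℕ) < (k' : ℕ) := hk
    exact Fin.mk_lt_mk.mpr (by omega)
  have huniq := Finset.orderEmbOfFin_unique a.card_suppF (f := g)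
    (fun x => hmem _) hgmono
  rw [iota_eq_emb]
  have h2 := congrFun huniq ⟨N - 1 - t, by have := t.isLt; omega⟩
  rw [← h2]
  simp only [hg]
  congr 1
  exact Fin.ext (by have := t.isLt; simp; omega)

lemma suppF_eq_image_iota (a : Abacus N) : a.suppF = Finset.image a.iota Finset.univ := by
  symm
  apply Finset.eq_of_subset_of_card_le
  · intro x hx
    obtain ⟨k, -, rfl⟩ := Finset.mem_image.mp hx
    exact a.iota_mem k
  · rw [a.card_suppF, Finset.card_image_of_injective _ a.iota_injective,
      Finset.card_univ, Fintype.card_fin]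

/-- key rank fact: `x < iota k` iff `k` is less than the number of occupied
positions greater than `x`. -/
lemma lt_iota_iff (a : Abacus N) (x : ℕ) (k : Fin N) :
    x < a.iota k ↔ (k : ℕ) < ((a.suppF).filter (fun s => x < s)).card := by
  constructor
  · intro hk
    have hsub : Finset.image a.iota (Finset.Iic k) ⊆ (a.suppF).filter (fun s => x < s) := by
      intro y hy
      obtain ⟨j, hj, rfl⟩ := Finset.mem_image.mp hy
      rw [Finset.mem_Iic] at hj
      refine Finset.mem_filter.mpr ⟨a.iota_mem j, lt_of_lt_of_le hk (a.iota_anti hj)⟩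
    have hc := Finset.card_le_card hsub
    rw [Finset.card_image_of_injective _ a.iota_injective, Fin.card_Iic] at hc
    omega
  · intro hk
    by_contra hlt
    push_neg at hlt
    have hsub : (a.suppF).filter (fun s => x < s) ⊆ Finset.image a.iota (Finset.Iio k) := by
      intro y hy
      obtain ⟨hy1, hy2⟩ := Finset.mem_filter.mp hy
      rw [a.suppF_eq_image_iota] at hy1
      obtain ⟨j, -, rfl⟩ := Finset.mem_image.mp hy1
      refine Finset.mem_image.mpr ⟨j, Finset.mem_Iio.mpr ?_, rfl⟩
      by_contra hjk
      push_neg at hjk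
      exact absurd (lt_of_lt_of_le hy2 (le_trans (a.iota_anti hjk) hlt)) (lt_irrefl x)
    have hc := Finset.card_le_card hsub
    rw [Finset.card_image_of_injective _ a.iota_injective, Fin.card_Iio] at hc
    omega

lemma card_filter_gt_iota (a : Abacus N) (b : Fin N) :
    ((a.suppF).filter (fun s => a.iota b < s)).card = b := by
  set T := ((a.suppF).filter (fun s => a.iota b < s)).card with hT
  have hTle : T ≤ N := le_trans (Finset.card_le_card (Finset.filter_subset _ _))
    (le_of_eq a.card_suppF)
  rcases lt_trichotomy T (b : ℕ) with h | h | h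
  · exfalso
    have hbN := b.isLt
    have hTN : T < N := by omega
    set k : Fin N := ⟨T, hTN⟩ with hk
    have hv : (k : ℕ) = T := rfl
    have hlt : k < b := by rw [Fin.lt_def]; omega
    have key := (a.lt_iota_iff (a.iota b) k).mp (a.iota_strictAnti hlt)
    omega
  · exact h.symm ▸ rfl
  · exfalso
    have h2 := (a.lt_iota_iff (a.iota b) b).mpr (by omega)
    exact absurd h2 (lt_irrefl _)

end Abacus
/-- Construct a `Ptn` from an antitone function vanishing from `N` on. -/
def mkPtn (N : ℕ) (f : ℕ → ℕ) (hf : Antitone f) (h0 : ∀ i, N ≤ i → f i = 0) : Ptn :=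
  ⟨Finsupp.onFinset (Finset.range N) f
    (fun a ha => Finset.mem_range.mpr (by by_contra h; exact ha (h0 a (le_of_not_gt h)))),
   hf⟩

@[simp] lemma mkPtn_part (N : ℕ) (f : ℕ → ℕ) (hf : Antitone f)
    (h0 : ∀ i, N ≤ i → f i = 0) (k : ℕ) : (mkPtn N f hf h0).part k = f k := rfl

namespace Abacus

variable {N : ℕ}

lemma strictAnti_fin_bound {f : Fin N → ℕ} (hf : StrictAnti f) (k : Fin N) :
    N - 1 - (k : ℕ) ≤ f k := by
  have key : ∀ m : ℕ, ∀ j : Fin N, (j : ℕ) + m = N - 1 → m ≤ f j := by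
    intro m
    induction m with
    | zero => intro j _; omega
    | succ m ih =>
      intro j hj
      have hjN : (j : ℕ) + 1 < N := by omega
      have h1 := ih ⟨(j : ℕ) + 1, hjN⟩ (by simp; omega)
      have h2 : f ⟨(j : ℕ) + 1, hjN⟩ < f j := hf (by rw [Fin.lt_def]; simp)
      omega
  have hk := k.isLt
  exact key (N - 1 - (k : ℕ)) k (by omega)

lemma iota_lower_bound (a : Abacus N) (k : Fin N) : N - 1 - (k : ℕ) ≤ a.iota k :=
  strictAnti_fin_bound a.iota_strictAnti k

/-- The shape of an abacus, as a partition. -/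
def shapeOf (a : Abacus N) : Ptn :=
  mkPtn N (fun k => if h : k < N then a.iota ⟨k, h⟩ - (N - 1 - k) else 0)
    (by
      apply antitone_nat_of_succ_le
      intro k
      by_cases h1 : k + 1 < N
      · have hk : k < N := by omega
        simp only [dif_pos h1, dif_pos hk]
        have h2 : a.iota ⟨k + 1, h1⟩ < a.iota ⟨k, hk⟩ :=
          a.iota_strictAnti (by rw [Fin.lt_def]; simp)
        have h3 := a.iota_lower_bound ⟨k + 1, h1⟩
        simp at h3
        omega
      · simp only [dif_neg h1]
        omega)
    (fun i hi => by simp only [dif_neg (by omega : ¬ i < N)])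

lemma shapeOf_hasShape (a : Abacus N) : a.HasShape (shapeOf a) := by
  constructor
  · intro t
    have ht := t.isLt
    have hb := a.iota_lower_bound t
    simp only [shapeOf, mkPtn_part, dif_pos ht]
    have : (⟨(t : ℕ), ht⟩ : Fin N) = t := Fin.ext rfl
    rw [this]
    omega
  · intro i hi
    simp only [shapeOf, mkPtn_part, dif_neg (by omega : ¬ i < N)]

lemma hasShape_unique {a : Abacus N} {p q : Ptn} (hp : a.HasShape p) (hq : a.HasShape q) :
    p = q := by
  apply Ptn.ext'
  intro i
  by_cases hi : i < N
  · have h1 := hp.1 ⟨i, hi⟩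
    have h2 := hq.1 ⟨i, hi⟩
    simp only at h1 h2
    omega
  · rw [hp.2 i (by omega), hq.2 i (by omega)]

lemma hasShape_part_lt {a : Abacus N} {p : Ptn} (hp : a.HasShape p) (t : Fin N) :
    a.iota t = p.part t + (N - 1 - (t : ℕ)) := (hp.1 t).symm

/-- The occupied positions in terms of the shape. -/
lemma suppF_of_hasShape {a : Abacus N} {p : Ptn} (hp : a.HasShape p) (x : ℕ) :
    x ∈ a.suppF ↔ ∃ k : Fin N, x = p.part k + (N - 1 - (k : ℕ)) := by
  rw [a.suppF_eq_image_iota]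
  simp only [Finset.mem_image, Finset.mem_univ, true_and]
  constructor
  · rintro ⟨k, rfl⟩; exact ⟨k, hasShape_part_lt hp k⟩
  · rintro ⟨k, rfl⟩; exact ⟨k, hasShape_part_lt hp k⟩

end Abacus
/-! ### The piecewise partition obtained by adding a border strip in rows `t..b` -/

/-- The parts of the partition obtained from `γ` by adding a strip occupying rows
`t..b` (0-based), with new top row length `g`. -/
def pw (γ : Ptn) (t b g : ℕ) : ℕ → ℕ := fun k =>
  if k < t then γ.part k else if k = t then g
  else if k ≤ b then γ.part (k - 1) + 1 else γ.part k

/-- Hypotheses on the strip parameters. -/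
structure PWH (N : ℕ) (γ : Ptn) (t b g : ℕ) : Prop where
  htb : t ≤ b
  hbN : b < N
  hgt : γ.part t < g
  hgle : t = 0 ∨ g ≤ γ.part (t - 1)
  hγ0 : ∀ i, N ≤ i → γ.part i = 0

namespace PWH

variable {N : ℕ} {γ : Ptn} {t b g : ℕ}

lemma pw_lo {k : ℕ} (h : k < t) : pw γ t b g k = γ.part k := if_pos h

lemma pw_eq {k : ℕ} (h : k = t) : pw γ t b g k = g := by
  simp only [pw, if_neg (by omega : ¬ k < t), if_pos h]

lemma pw_mid {k : ℕ} (h1 : t < k) (h2 : k ≤ b) : pw γ t b g k = γ.part (k - 1) + 1 := by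
  simp only [pw, if_neg (by omega : ¬ k < t), if_neg (by omega : ¬ k = t), if_pos h2]

lemma pw_hi (H : PWH N γ t b g) {k : ℕ} (h : b < k) : pw γ t b g k = γ.part k := by
  have := H.htb
  simp only [pw, if_neg (by omega : ¬ k < t), if_neg (by omega : ¬ k = t),
    if_neg (by omega : ¬ k ≤ b)]

lemma pw_antitone (H : PWH N γ t b g) : Antitone (pw γ t b g) := by
  apply antitone_nat_of_succ_le
  intro k
  rcases lt_trichotomy (k + 1) t with h | h | h
  · rw [pw_lo (by omega : k < t), pw_lo h]
    exact γ.part_mono (by omega)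
  · rw [pw_eq h, pw_lo (by omega : k < t)]
    rcases H.hgle with h0 | h0
    · omega
    · have : t - 1 = k := by omega
      rw [← this]; exact h0
  · by_cases hb : k + 1 ≤ b
    · rw [pw_mid h hb]
      simp only [Nat.add_sub_cancel]
      rcases lt_trichotomy k t with h2 | h2 | h2
      · omega
      · rw [pw_eq h2, h2]; exact H.hgt
      · rw [pw_mid h2 (by omega)]
        have := γ.part_mono (by omega : k - 1 ≤ k)
        omega
    · rw [pw_hi H (by omega : b < k + 1)]
      have htk : t ≤ k := by omega
      rcases eq_or_lt_of_le htk with h2 | h2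
      · rw [pw_eq h2.symm]
        have h3 := γ.part_mono (by omega : t ≤ k + 1)
        have := H.hgt
        omega
      · by_cases hkb : k ≤ b
        · rw [pw_mid h2 hkb]
          have := γ.part_mono (by omega : k - 1 ≤ k + 1)
          omega
        · rw [pw_hi H (by omega : b < k)]
          exact γ.part_mono (by omega)

lemma pw_zero (H : PWH N γ t b g) : ∀ i, N ≤ i → pw γ t b g i = 0 := by
  intro i hi
  rw [pw_hi H (by have := H.hbN; omega), H.hγ0 i hi]

/-- The partition `γ + strip`. -/
def ptn (H : PWH N γ t b g) : Ptn := mkPtn N (pw γ t b g) H.pw_antitone H.pw_zero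

@[simp] lemma ptn_part (H : PWH N γ t b g) (k : ℕ) : H.ptn.part k = pw γ t b g k := rfl

lemma part_le_pw (H : PWH N γ t b g) (k : ℕ) : γ.part k ≤ pw γ t b g k := by
  rcases lt_trichotomy k t with h | h | h
  · rw [pw_lo h]
  · rw [pw_eq h, h]; exact le_of_lt H.hgt
  · by_cases hb : k ≤ b
    · rw [pw_mid h hb]
      have := γ.part_mono (by omega : k - 1 ≤ k)
      omega
    · rw [pw_hi H (by omega)]

lemma sub (H : PWH N γ t b g) : Ptn.Sub γ H.ptn := fun k => H.part_le_pw k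

lemma row_nonempty_iff (H : PWH N γ t b g) (k : ℕ) :
    γ.part k < pw γ t b g k ↔ t ≤ k ∧ k ≤ b := by
  constructor
  · intro h
    constructor
    · by_contra h'; rw [pw_lo (by omega)] at h; omega
    · by_contra h'; rw [pw_hi H (by omega)] at h; omega
  · rintro ⟨h1, h2⟩
    rcases eq_or_lt_of_le h1 with h3 | h3
    · rw [pw_eq h3.symm, ← h3]; exact H.hgt
    · rw [pw_mid h3 h2]
      have := γ.part_mono (by omega : k - 1 ≤ k)
      omega

lemma sum_diff (H : PWH N γ t b g) :
    (∑ k ∈ Finset.range N, (pw γ t b g k - γ.part k)) + γ.part b + t = g + b := by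
  have hIcc : ∀ m, t + m ≤ b →
      (∑ k ∈ Finset.Icc t (t + m), (pw γ t b g k - γ.part k)) + γ.part (t + m) + t
        = g + (t + m) := by
    intro m
    induction m with
    | zero =>
      intro _
      simp only [Nat.add_zero, Finset.Icc_self, Finset.sum_singleton, pw_eq rfl]
      have := H.hgt
      omega
    | succ m ih =>
      intro hm
      have hins : Finset.Icc t (t + m + 1) = insert (t + m + 1) (Finset.Icc t (t + m)) := by
        ext x
        simp only [Finset.mem_Icc, Finset.mem_insert]
        omega
      rw [show t + (m + 1) = t + m + 1 by omega, hins,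
        Finset.sum_insert (by simp only [Finset.mem_Icc]; omega)]
      have hv : pw γ t b g (t + m + 1) = γ.part (t + m) + 1 := by
        rw [pw_mid (by omega) (by omega), Nat.add_sub_cancel]
      have hmono := γ.part_mono (by omega : t + m ≤ t + m + 1)
      have ihm := ih (by omega)
      omega
  have htb := H.htb
  have hmain := hIcc (b - t) (by omega)
  rw [show t + (b - t) = b by have := H.htb; omega] at hmain
  have hss : Finset.Icc t b ⊆ Finset.range N := by
    intro x hx
    simp only [Finset.mem_Icc] at hx
    simp only [Finset.mem_range]
    have := H.hbN
    omega
  have hzero : ∀ x ∈ Finset.range N, x ∉ Finset.Icc t b → pw γ t b g x - γ.part x = 0 := by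
    intro x _ hx
    simp only [Finset.mem_Icc] at hx
    rcases lt_or_ge x t with h | h
    · rw [pw_lo h]; omega
    · rw [pw_hi H (by omega)]; omega
  rw [← Finset.sum_subset hss hzero]
  omega

lemma size_eq (H : PWH N γ t b g) {r : ℕ} (hrr : γ.part b + r + t = g + b) :
    H.ptn.size = γ.size + r := by
  rw [Ptn.size_eq_sum H.ptn H.pw_zero, Ptn.size_eq_sum γ H.hγ0]
  have hsplit : ∀ k ∈ Finset.range N,
      H.ptn.part k = γ.part k + (pw γ t b g k - γ.part k) := by
    intro k _
    have := H.part_le_pw k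
    rw [ptn_part]
    omega
  rw [Finset.sum_congr rfl hsplit, Finset.sum_add_distrib]
  have := H.sum_diff
  omega

lemma ne_ptn (H : PWH N γ t b g) : γ ≠ H.ptn := by
  intro h
  have : γ.part t = H.ptn.part t := by rw [← h]
  rw [ptn_part, pw_eq rfl] at this
  have := H.hgt
  omega

lemma top_eq (H : PWH N γ t b g) : Ptn.top γ H.ptn = t + 1 := by
  rw [Ptn.top, if_neg H.ne_ptn]
  have hmem : t ∈ {i | γ.part i ≠ H.ptn.part i} := by
    simp only [Set.mem_setOf_eq, ptn_part, pw_eq rfl]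
    have := H.hgt
    omega
  have h1 : sInf {i | γ.part i ≠ H.ptn.part i} ≤ t := Nat.sInf_le hmem
  have h2 : sInf {i | γ.part i ≠ H.ptn.part i} ∈ {i | γ.part i ≠ H.ptn.part i} :=
    Nat.sInf_mem ⟨t, hmem⟩
  have h3 : ¬ sInf {i | γ.part i ≠ H.ptn.part i} < t := by
    intro h4
    refine h2 ?_
    show γ.part _ = H.ptn.part _
    rw [ptn_part, pw_lo h4]
  omega

lemma mem_skew_iff (H : PWH N γ t b g) (k c : ℕ) :
    (k, c) ∈ Ptn.skew γ H.ptn ↔ γ.part k ≤ c ∧ c < pw γ t b g k := by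
  rw [Ptn.mem_skew]
  rfl

end PWH
/-! ### Connectivity of the strip -/

lemma adjacent_symm {x y : ℕ × ℕ} (h : Adjacent x y) : Adjacent y x := by
  unfold Adjacent at *
  tauto

lemma rtg_mem {S : Set (ℕ × ℕ)} {x y : ℕ × ℕ} (hx : x ∈ S)
    (h : Relation.ReflTransGen (fun u v => v ∈ S ∧ Adjacent u v) x y) : y ∈ S := by
  induction h with
  | refl => exact hx
  | tail _ h2 _ => exact h2.1

lemma rtg_symm {S : Set (ℕ × ℕ)} {x y : ℕ × ℕ} (hx : x ∈ S)
    (h : Relation.ReflTransGen (fun u v => v ∈ S ∧ Adjacent u v) x y) :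
    Relation.ReflTransGen (fun u v => v ∈ S ∧ Adjacent u v) y x := by
  induction h with
  | refl => exact .refl
  | tail h1 h2 ih => exact Relation.ReflTransGen.head ⟨rtg_mem hx h1, adjacent_symm h2.2⟩ ih

namespace PWH

variable {N : ℕ} {γ : Ptn} {t b g : ℕ}

lemma walk_left (H : PWH N γ t b g) :
    ∀ (n k c : ℕ), (k, c) ∈ Ptn.skew γ H.ptn → c = γ.part k + n →
      Relation.ReflTransGen (fun u v => v ∈ Ptn.skew γ H.ptn ∧ Adjacent u v)
        (k, c) (k, γ.part k) := by
  intro n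
  induction n with
  | zero => intro k c _ hc; rw [hc]; exact .refl
  | succ n ih =>
    intro k c hmem hc
    have h1 := (H.mem_skew_iff k c).mp hmem
    have h2 : (k, γ.part k + n) ∈ Ptn.skew γ H.ptn := by
      rw [H.mem_skew_iff]
      omega
    refine Relation.ReflTransGen.head ⟨h2, ?_⟩ (ih k (γ.part k + n) h2 rfl)
    left
    exact ⟨rfl, Or.inr (by simp; omega)⟩

lemma reach_bot (H : PWH N γ t b g) :
    ∀ (m k : ℕ), t ≤ k → k ≤ b → b = k + m →
      Relation.ReflTransGen (fun u v => v ∈ Ptn.skew γ H.ptn ∧ Adjacent u v)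
        (k, γ.part k) (b, γ.part b) := by
  intro m
  induction m with
  | zero =>
    intro k _ _ hb
    obtain rfl : k = b := by omega
    exact .refl
  | succ m ih =>
    intro k hk1 hk2 hb
    have hstep : (k + 1, γ.part k) ∈ Ptn.skew γ H.ptn := by
      rw [H.mem_skew_iff, pw_mid (by omega) (by omega), Nat.add_sub_cancel]
      exact ⟨γ.part_mono (by omega), by omega⟩
    refine Relation.ReflTransGen.head ⟨hstep, Or.inr ⟨rfl, Or.inl rfl⟩⟩ ?_
    refine Relation.ReflTransGen.trans
      (H.walk_left (γ.part k - γ.part (k + 1)) (k + 1) (γ.part k) hstep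
        (by have := γ.part_mono (by omega : k ≤ k + 1); omega)) ?_
    exact ih (k + 1) (by omega) (by omega) (by omega)

lemma row_bounds (H : PWH N γ t b g) {k c : ℕ} (h : (k, c) ∈ Ptn.skew γ H.ptn) :
    t ≤ k ∧ k ≤ b := by
  rw [H.mem_skew_iff] at h
  exact (H.row_nonempty_iff k).mp (by omega)

lemma reach (H : PWH N γ t b g) {x : ℕ × ℕ} (hx : x ∈ Ptn.skew γ H.ptn) :
    Relation.ReflTransGen (fun u v => v ∈ Ptn.skew γ H.ptn ∧ Adjacent u v)
      x (b, γ.part b) := by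
  obtain ⟨k, c⟩ := x
  have hb := H.row_bounds hx
  have h1 := (H.mem_skew_iff k c).mp hx
  exact Relation.ReflTransGen.trans
    (H.walk_left (c - γ.part k) k c hx (by omega))
    (H.reach_bot (b - k) k hb.1 hb.2 (by omega))

lemma connected (H : PWH N γ t b g) : ConnectedSet (Ptn.skew γ H.ptn) := by
  intro c hc d hd
  exact Relation.ReflTransGen.trans (H.reach hc) (rtg_symm hd (H.reach hd))

lemma no_diag (H : PWH N γ t b g) :
    ∀ c ∈ Ptn.skew γ H.ptn, (c.1 + 1, c.2 + 1) ∉ Ptn.skew γ H.ptn := by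
  rintro ⟨k, c⟩ hc hc2
  have hb1 := H.row_bounds hc
  have hb2 := H.row_bounds hc2
  simp only at hb2
  have h1 := (H.mem_skew_iff k c).mp hc
  have h2 := (H.mem_skew_iff (k + 1) (c + 1)).mp hc2
  rw [pw_mid (by omega) (by omega), Nat.add_sub_cancel] at h2
  omega

lemma isBorderStrip (H : PWH N γ t b g) {r : ℕ} (hrr : γ.part b + r + t = g + b) :
    IsBorderStrip r γ H.ptn :=
  ⟨H.sub, H.size_eq hrr, H.connected, H.no_diag⟩

end PWH
/-! ### Abacus moves vs border strips -/

namespace Abacus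

variable {N : ℕ}

/-- Constructing the abacus obtained by moving the bead at position `i` to `i + r`. -/
lemma exists_isRMove (a : Abacus N) (i r : ℕ) (hr : 0 < r) (h1 : a.w i ≠ 0)
    (h2 : a.w (i + r) = 0) : ∃ a' : Abacus N, IsRMove r a a' i := by
  refine ⟨⟨fun j => if j = i then 0 else if j = i + r then a.w i else a.w j, ?_, ?_⟩, ?_⟩
  · intro j
    split_ifs
    · omega
    · exact a.w_le _
    · exact a.w_le _
  · intro B hB1 hBN
    obtain ⟨p, hp, hup⟩ := a.uniq B hB1 hBN
    by_cases hpi : p = i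
    · refine ⟨i + r, ?_, ?_⟩
      · dsimp only
        rw [if_neg (by omega), if_pos rfl, ← hpi]
        exact hp
      · intro j hj
        split_ifs at hj with hj1 hj2
        · omega
        · exact hj2
        · exact absurd ((hup j hj).trans hpi) hj1
    · have hpir : p ≠ i + r := by
        intro h; rw [h] at hp; rw [hp] at h2; omega
      refine ⟨p, ?_, ?_⟩
      · dsimp only
        rw [if_neg hpi, if_neg hpir, hp]
      · intro j hj
        split_ifs at hj with hj1 hj2
        · omega
        · exfalso; exact hpi (hup i hj).symm
        · exact hup j hj
  · refine ⟨h1, h2, ?_, ?_, ?_⟩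
    · show (if i = i then 0 else _) = 0
      rw [if_pos rfl]
    · show (if i + r = i then 0 else if i + r = i + r then a.w i else _) = a.w i
      rw [if_neg (by omega), if_pos rfl]
    · intro j hj1 hj2
      show (if j = i then 0 else if j = i + r then a.w i else a.w j) = a.w j
      rw [if_neg hj1, if_neg hj2]

lemma suppF_move {r : ℕ} {a a' : Abacus N} {i : ℕ} (hr : 0 < r)
    (hmv : IsRMove r a a' i) :
    a'.suppF = insert (i + r) (a.suppF.erase i) := by
  obtain ⟨h1, h2, h3, h4, h5⟩ := hmv
  ext j
  rw [mem_suppF_iff, Finset.mem_insert, Finset.mem_erase, mem_suppF_iff]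
  by_cases hj1 : j = i
  · subst hj1
    rw [h3]
    constructor
    · intro h; exact (h rfl).elim
    · rintro (h | h)
      · omega
      · exact (h.1 rfl).elim
  · by_cases hj2 : j = i + r
    · subst hj2
      rw [h4]
      simp only [true_or, iff_true]
      exact h1
    · rw [h5 j hj1 hj2]
      simp only [hj2, false_or, ne_eq, hj1, not_false_eq_true, true_and]

/-- Core lemma: the shape of the abacus after a move. -/
lemma shape_of_move {r : ℕ} {a a' : Abacus N} {i : ℕ} (hr : 0 < r) {γ : Ptn} {t b g : ℕ}
    (H : PWH N γ t b g) (hsh : a.HasShape γ)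
    (hib : i = γ.part b + (N - 1 - b)) (hir : i + r = g + (N - 1 - t))
    (hmv : IsRMove r a a' i) : a'.HasShape H.ptn := by
  have htb := H.htb
  have hbN := H.hbN
  set f : Fin N → ℕ := fun k => pw γ t b g k + (N - 1 - (k : ℕ)) with hf
  have hfainti : StrictAnti f := by
    intro k k' hkk
    have h1 := k.isLt
    have h2 := k'.isLt
    have h3 : (k : ℕ) < (k' : ℕ) := hkk
    have h4 := H.pw_antitone (le_of_lt h3)
    simp only [hf]
    omega
  have hsupp := suppF_move hr hmv
  have hmem : ∀ k : Fin N, f k ∈ a'.suppF := by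
    intro k
    rw [hsupp, Finset.mem_insert, Finset.mem_erase]
    have hkN := k.isLt
    have hiota : a.iota ⟨b, hbN⟩ = i := by
      rw [Abacus.hasShape_part_lt hsh ⟨b, hbN⟩, hib]
    rcases lt_trichotomy (k : ℕ) t with hk | hk | hk
    · right
      constructor
      · rw [hf]
        simp only
        rw [PWH.pw_lo hk, ← Abacus.hasShape_part_lt hsh k, ← hiota]
        intro hcon
        have := a.iota_injective hcon
        rw [Fin.ext_iff] at this
        simp only at this
        omega
      · rw [hf]
        simp only [PWH.pw_lo hk, ← Abacus.hasShape_part_lt hsh k]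
        exact a.iota_mem k
    · left
      rw [hf]
      simp only [PWH.pw_eq hk]
      omega
    · by_cases hkb : (k : ℕ) ≤ b
      · right
        have hk1N : (k : ℕ) - 1 < N := by omega
        have hval : f k = a.iota ⟨(k : ℕ) - 1, hk1N⟩ := by
          rw [Abacus.hasShape_part_lt hsh ⟨(k : ℕ) - 1, hk1N⟩, hf]
          simp only [PWH.pw_mid hk hkb]
          omega
        constructor
        · rw [hval, ← hiota]
          intro hcon
          have := a.iota_injective hcon
          rw [Fin.ext_iff] at this
          simp only at this
          omega
        · rw [hval]; exact a.iota_mem _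
      · right
        constructor
        · rw [hf]
          simp only
          rw [H.pw_hi (by omega), ← Abacus.hasShape_part_lt hsh k, ← hiota]
          intro hcon
          have := a.iota_injective hcon
          rw [Fin.ext_iff] at this
          simp only at this
          omega
        · rw [hf]
          simp only [H.pw_hi (by omega : b < (k : ℕ)),
            ← Abacus.hasShape_part_lt hsh k]
          exact a.iota_mem k
  constructor
  · intro k
    rw [a'.iota_eq_of_strictAnti f hfainti hmem k]
    rfl
  · exact H.pw_zero

end Abacus
namespace Abacus

variable {N : ℕ}

/-- The parameters of the border strip corresponding to an `r`-move. -/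
lemma params_of_move {r : ℕ} (hr : 0 < r) {a a' : Abacus N} {i : ℕ} {γ : Ptn}
    (hsh : a.HasShape γ) (hmv : IsRMove r a a' i) :
    ∃ t b g : ℕ, ∃ H : PWH N γ t b g,
      i = γ.part b + (N - 1 - b) ∧ i + r = g + (N - 1 - t) ∧
      γ.part b + r + t = g + b ∧
      t = ((a.suppF).filter (fun s => i + r < s)).card ∧
      a'.HasShape H.ptn := by
  have hiw : i ∈ a.suppF := (a.mem_suppF_iff i).mpr hmv.1
  have hirw : i + r ∉ a.suppF := fun h => by
    rw [a.mem_suppF_iff] at h; exact h hmv.2.1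
  rw [a.suppF_eq_image_iota] at hiw
  obtain ⟨bf, -, hbf⟩ := Finset.mem_image.mp hiw
  set t := ((a.suppF).filter (fun s => i + r < s)).card with ht
  have hrank : ((a.suppF).filter (fun s => i < s)).card = (bf : ℕ) := by
    rw [← hbf]; exact a.card_filter_gt_iota bf
  have htb : t ≤ (bf : ℕ) := by
    rw [← hrank]
    apply Finset.card_le_card
    intro s hs
    rw [Finset.mem_filter] at hs ⊢
    exact ⟨hs.1, by omega⟩
  have hbN := bf.isLt
  have htN : t < N := by omega
  have htlt : a.iota ⟨t, htN⟩ < i + r := by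
    have h1 : ¬ i + r < a.iota ⟨t, htN⟩ := by
      intro h
      have := (a.lt_iota_iff (i + r) ⟨t, htN⟩).mp h
      simp only at this
      omega
    have h2 : a.iota ⟨t, htN⟩ ≠ i + r := by
      intro h
      exact hirw (h ▸ a.iota_mem ⟨t, htN⟩)
    omega
  have hit := Abacus.hasShape_part_lt hsh ⟨t, htN⟩
  simp only at hit
  have hib : i = γ.part (bf : ℕ) + (N - 1 - (bf : ℕ)) := by
    rw [← Abacus.hasShape_part_lt hsh bf, hbf]
  set g := i + r - (N - 1 - t) with hg
  have hir : i + r = g + (N - 1 - t) := by omega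
  have hgt : γ.part t < g := by omega
  have hgle : t = 0 ∨ g ≤ γ.part (t - 1) := by
    rcases Nat.eq_zero_or_pos t with h0 | h0
    · exact Or.inl h0
    · right
      have ht1N : t - 1 < N := by omega
      have hlt2 : i + r < a.iota ⟨t - 1, ht1N⟩ :=
        (a.lt_iota_iff (i + r) ⟨t - 1, ht1N⟩).mpr (by simp only; omega)
      have hit2 := Abacus.hasShape_part_lt hsh ⟨t - 1, ht1N⟩
      simp only at hit2
      omega
  have hrel : γ.part (bf : ℕ) + r + t = g + (bf : ℕ) := by omega
  have H : PWH N γ t (bf : ℕ) g := ⟨htb, hbN, hgt, hgle, hsh.2⟩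
  exact ⟨t, (bf : ℕ), g, H, hib, hir, hrel, rfl,
    Abacus.shape_of_move hr H hsh hib hir hmv⟩

/-- Given strip parameters, the corresponding `r`-move exists. -/
lemma exists_move_of_params {r : ℕ} (hr : 0 < r) {a : Abacus N} {γ : Ptn} {t b g : ℕ}
    (H : PWH N γ t b g) (hsh : a.HasShape γ) (hrr : γ.part b + r + t = g + b) :
    ∃ a' : Abacus N, IsRMove r a a' (γ.part b + (N - 1 - b)) ∧ a'.HasShape H.ptn ∧
      γ.part b + (N - 1 - b) + r = g + (N - 1 - t) := by
  have htb := H.htb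
  have hbN := H.hbN
  have hgt := H.hgt
  set i := γ.part b + (N - 1 - b) with hi
  have hir : i + r = g + (N - 1 - t) := by
    have := γ.part_mono (htb : t ≤ b)
    omega
  have hiw : a.w i ≠ 0 := by
    rw [← a.mem_suppF_iff]
    rw [Abacus.suppF_of_hasShape hsh]
    exact ⟨⟨b, hbN⟩, rfl⟩
  have hempty : a.w (i + r) = 0 := by
    by_contra hne
    have : i + r ∈ a.suppF := (a.mem_suppF_iff _).mpr hne
    rw [Abacus.suppF_of_hasShape hsh] at this
    obtain ⟨k, hk⟩ := this
    have hkN := k.isLt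
    rw [hir] at hk
    rcases lt_trichotomy (k : ℕ) t with h | h | h
    · have h1 : g ≤ γ.part (k : ℕ) := by
        rcases H.hgle with h0 | h0
        · omega
        · exact le_trans h0 (γ.part_mono (by omega))
      omega
    · rw [h] at hk; omega
    · have h1 : γ.part (k : ℕ) ≤ γ.part t := γ.part_mono (by omega)
      omega
  obtain ⟨a', hmv⟩ := a.exists_isRMove i r hr hiw hempty
  exact ⟨a', hmv, Abacus.shape_of_move hr H hsh hi hir hmv, hir⟩

end Abacus
/-! ### Extracting strip parameters from a border strip -/

lemma crossing {S : Set (ℕ × ℕ)} {x y : ℕ × ℕ} (hx : x ∈ S)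
    (h : Relation.ReflTransGen (fun u v => v ∈ S ∧ Adjacent u v) x y) :
    ∀ k, y.1 ≤ k → k < x.1 → ∃ c, (k, c) ∈ S ∧ (k + 1, c) ∈ S := by
  induction h with
  | refl => intro k h1 h2; omega
  | @tail m z h1 h2 ih =>
    intro k hk1 hk2
    by_cases hm : m.1 ≤ k
    · exact ih k hm hk2
    · have hmS : m ∈ S := rtg_mem hx h1
      obtain ⟨hzS, hadj⟩ := h2
      obtain ⟨m1, m2⟩ := m
      obtain ⟨z1, z2⟩ := z
      simp only at hm hk1 hmS hzS
      rcases hadj with ⟨he, -⟩ | ⟨he, hv | hv⟩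
      · simp only at he; omega
      · simp only at he hv; omega
      · simp only at he hv
        obtain rfl : k = z1 := by omega
        refine ⟨z2, hzS, ?_⟩
        rw [hv, ← he]
        exact hmS

lemma strip_params {N r : ℕ} (hr : 0 < r) {γ γ' : Ptn}
    (hγ0 : ∀ i, N ≤ i → γ.part i = 0) (hγ'0 : ∀ i, N ≤ i → γ'.part i = 0)
    (hbs : IsBorderStrip r γ γ') :
    ∃ t b g : ℕ, ∃ H : PWH N γ t b g, γ' = H.ptn ∧ γ.part b + r + t = g + b := by
  obtain ⟨hsub, hsize, hconn, hdiag⟩ := hbs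
  set R := (Finset.range N).filter (fun k => γ.part k < γ'.part k) with hR
  have hRne : R.Nonempty := by
    by_contra h
    rw [Finset.not_nonempty_iff_eq_empty] at h
    have hall : ∀ k, γ'.part k = γ.part k := by
      intro k
      by_cases hk : k < N
      · have hknR : k ∉ R := by rw [h]; exact Finset.notMem_empty k
        rw [hR, Finset.mem_filter] at hknR
        push_neg at hknR
        exact le_antisymm (hknR (Finset.mem_range.mpr hk)) (hsub k)
      · rw [hγ'0 k (by omega), hγ0 k (by omega)]
    have h1 : γ'.size = γ.size := by
      rw [Ptn.size_eq_sum γ' hγ'0, Ptn.size_eq_sum γ hγ0]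
      exact Finset.sum_congr rfl (fun k _ => hall k)
    omega
  set t := R.min' hRne with htdef
  set b := R.max' hRne with hbdef
  have htR : t ∈ R := R.min'_mem hRne
  have hbR : b ∈ R := R.max'_mem hRne
  rw [hR, Finset.mem_filter, Finset.mem_range] at htR hbR
  have htb : t ≤ b := R.min'_le b (by rw [hR, Finset.mem_filter, Finset.mem_range]; exact hbR)
  have hbN : b < N := hbR.1
  have hlo : ∀ k, k < t → γ'.part k = γ.part k := by
    intro k hk
    by_contra hne
    have hkR : k ∈ R := by
      rw [hR, Finset.mem_filter, Finset.mem_range]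
      have := hsub k
      exact ⟨by omega, by omega⟩
    have := R.min'_le k hkR
    omega
  have hhi : ∀ k, b < k → γ'.part k = γ.part k := by
    intro k hk
    by_cases hkN : k < N
    · by_contra hne
      have hkR : k ∈ R := by
        rw [hR, Finset.mem_filter, Finset.mem_range]
        have := hsub k
        exact ⟨hkN, by omega⟩
      have := R.le_max' k hkR
      omega
    · rw [hγ'0 k (by omega), hγ0 k (by omega)]
  have hrow : ∀ k, t ≤ k → k < b →
      ∃ c, (k, c) ∈ Ptn.skew γ γ' ∧ (k + 1, c) ∈ Ptn.skew γ γ' := by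
    intro k hk1 hk2
    have hxmem : ((b, γ.part b) : ℕ × ℕ) ∈ Ptn.skew γ γ' := by
      rw [Ptn.mem_skew]; exact ⟨le_refl _, hbR.2⟩
    have hymem : ((t, γ.part t) : ℕ × ℕ) ∈ Ptn.skew γ γ' := by
      rw [Ptn.mem_skew]; exact ⟨le_refl _, htR.2⟩
    exact crossing hxmem (hconn _ hxmem _ hymem) k hk1 hk2
  have hmid : ∀ k, t ≤ k → k < b → γ'.part (k + 1) = γ.part k + 1 := by
    intro k hk1 hk2
    obtain ⟨c, hc1, hc2⟩ := hrow k hk1 hk2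
    rw [Ptn.mem_skew] at hc1 hc2
    simp only at hc1 hc2
    have hge : γ.part k + 1 ≤ γ'.part (k + 1) := by omega
    by_contra hne
    have hge2 : γ.part k + 2 ≤ γ'.part (k + 1) := by omega
    set j := γ'.part (k + 1) - 1 with hj
    have hjge : γ.part k + 1 ≤ j := by omega
    have hmono := γ'.part_mono (by omega : k ≤ k + 1)
    have hcell : ((k, j - 1) : ℕ × ℕ) ∈ Ptn.skew γ γ' := by
      rw [Ptn.mem_skew]
      constructor
      · simp only; omega
      · simp only; omega
    have hnd := hdiag _ hcell
    simp only at hnd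
    apply hnd
    rw [Ptn.mem_skew]
    have hmono2 := γ.part_mono (by omega : k ≤ k + 1)
    constructor
    · simp only; omega
    · simp only; omega
  set g := γ'.part t with hgdef
  have hgt : γ.part t < g := htR.2
  have hgle : t = 0 ∨ g ≤ γ.part (t - 1) := by
    rcases Nat.eq_zero_or_pos t with h0 | h0
    · exact Or.inl h0
    · right
      rw [hgdef, ← hlo (t - 1) (by omega)]
      exact γ'.part_mono (by omega)
  have H : PWH N γ t b g := ⟨htb, hbN, hgt, hgle, hγ0⟩
  have heq : ∀ k, γ'.part k = pw γ t b g k := by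
    intro k
    rcases lt_trichotomy k t with h | h | h
    · rw [PWH.pw_lo h, hlo k h]
    · rw [PWH.pw_eq h, h, hgdef]
    · by_cases hkb : k ≤ b
      · rw [PWH.pw_mid h hkb]
        have := hmid (k - 1) (by omega) (by omega)
        rw [show k - 1 + 1 = k by omega] at this
        exact this
      · rw [H.pw_hi (by omega), hhi k (by omega)]
  have hptn : γ' = H.ptn := Ptn.ext' (fun k => by rw [heq k]; rfl)
  have hsum : H.ptn.size = γ.size + ∑ k ∈ Finset.range N, (pw γ t b g k - γ.part k) := by
    rw [Ptn.size_eq_sum H.ptn H.pw_zero, Ptn.size_eq_sum γ hγ0]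
    have hsplit : ∀ k ∈ Finset.range N,
        H.ptn.part k = γ.part k + (pw γ t b g k - γ.part k) := by
      intro k _
      have := H.part_le_pw k
      rw [PWH.ptn_part]
      omega
    rw [Finset.sum_congr rfl hsplit, Finset.sum_add_distrib]
  have hdiff := H.sum_diff
  rw [hptn] at hsize
  exact ⟨t, b, g, H, hptn, by omega⟩

/-! ### Assembly -/

lemma exists_abacus_of_shape {N : ℕ} (p : Ptn) (hp : ∀ i, N ≤ i → p.part i = 0) :
    ∃ a : Abacus N, a.HasShape p := by
  classical
  set f : Fin N → ℕ := fun t => p.part t + (N - 1 - (t : ℕ)) with hf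
  have hanti : StrictAnti f := by
    intro k k' hkk
    have h1 := k.isLt
    have h2 := k'.isLt
    have h3 : (k : ℕ) < (k' : ℕ) := hkk
    have h4 := p.part_mono (le_of_lt h3)
    simp only [hf]
    omega
  have hinj : Function.Injective f := hanti.injective
  refine ⟨⟨fun j => if h : ∃ t : Fin N, j = f t then ((h.choose : ℕ) + 1) else 0, ?_, ?_⟩,
    ?_, hp⟩
  · intro j
    split_ifs with h
    · exact h.choose.isLt
    · omega
  · intro B hB1 hBN
    have hBf : B - 1 < N := by omega
    refine ⟨f ⟨B - 1, hBf⟩, ?_, ?_⟩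
    · dsimp only
      have hex : ∃ t : Fin N, f ⟨B - 1, hBf⟩ = f t := ⟨⟨B - 1, hBf⟩, rfl⟩
      rw [dif_pos hex]
      have := hinj hex.choose_spec.symm
      rw [this]
      simp only
      omega
    · intro j hj
      split_ifs at hj with h
      · have hc : (h.choose : ℕ) = B - 1 := by omega
        have : h.choose = (⟨B - 1, hBf⟩ : Fin N) := Fin.ext hc
        rw [h.choose_spec, this]
      · omega
  · intro t
    show p.part t + (N - 1 - (t : ℕ)) = _
    rw [Abacus.iota_eq_of_strictAnti _ f hanti]
    intro t'
    rw [Abacus.mem_suppF_iff]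
    dsimp only
    have hex : ∃ t'' : Fin N, f t' = f t'' := ⟨t', rfl⟩
    rw [dif_pos hex]
    omega

lemma rchain_sub {r : ℕ} {m l : Ptn} {d : ℕ} {γc : ℕ → Ptn} (hc : RChain r m l d γc) :
    ∀ j, j ≤ d → Ptn.Sub (γc j) l := by
  obtain ⟨h0, hd, hstrip, -⟩ := hc
  intro j hj
  have key : ∀ k (hk : j ≤ k), k ≤ d → Ptn.Sub (γc j) (γc k) := by
    intro k hk
    induction k, hk using Nat.le_induction with
    | base => intro _ i; exact le_refl _
    | succ k hk ihk =>
      intro hkd i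
      exact le_trans (ihk (by omega) i) ((hstrip k (by omega)).1 i)
  rw [← hd]
  exact key d hj (le_refl d)

lemma forward_aux {N r : ℕ} (hr : 0 < r) (hN : 0 < N) :
    ∀ (d : ℕ) (m l : Ptn) (γc : ℕ → Ptn), RChain r m l d γc →
      (∀ i, N ≤ i → m.part i = 0) → (∀ i, N ≤ i → l.part i = 0) →
      ∀ a : Abacus N, a.HasShape m →
      ∃ (a' : Abacus N) (idx : Fin d → ℕ), a'.HasShape l ∧ SeriesRMoves r d a a' idx ∧
        ∀ h0 : 0 < d, ∃ t1 : Fin N, Ptn.top (γc 0) (γc 1) = (t1 : ℕ) + 1 ∧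
          a.iota t1 < idx ⟨0, h0⟩ + r := by
  intro d
  induction d with
  | zero =>
    intro m l γc hc hm0 hl0 a hsh
    obtain ⟨hc0, hcd, -, -⟩ := hc
    have hml : m = l := by rw [← hc0, hcd]
    refine ⟨a, fun x => x.elim0, hml ▸ hsh, ⟨fun x => x.elim0, fun _ => a, rfl, rfl,
      fun j => j.elim0⟩, fun h0 => absurd h0 (lt_irrefl 0)⟩
  | succ d ih =>
    intro m l γc hc hm0 hl0 a hsh
    obtain ⟨hc0, hcd, hstrip, htops⟩ := hc
    subst hc0
    obtain ⟨t, b, g, H, hptn, hrel⟩ :=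
      strip_params hr (N := N) hm0
        (fun i hi => by
          have h1 := rchain_sub ⟨rfl, hcd, hstrip, htops⟩ 1 (by omega) i
          have h2 := hl0 i hi
          have h3 : (γc 1).part i = 0 := by omega
          exact h3)
        (hstrip 0 (by omega))
    obtain ⟨a1, hmv1, hsh1, hir⟩ := Abacus.exists_move_of_params hr H hsh hrel
    set i0 := (γc 0).part b + (N - 1 - b) with hi0
    have hsh1' : a1.HasShape (γc 1) := by rw [hptn]; exact hsh1
    have hchain' : RChain r (γc 1) l d (fun j => γc (j + 1)) :=
      ⟨rfl, hcd, fun i hi => hstrip (i + 1) (by omega),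
        fun i hi => htops (i + 1) (by omega)⟩
    obtain ⟨a', idx', hsh', hser', htop'⟩ := ih (γc 1) l (fun j => γc (j + 1)) hchain'
      (fun i hi => by
        have h1 := rchain_sub ⟨rfl, hcd, hstrip, htops⟩ 1 (by omega) i
        have h2 := hl0 i hi
        omega) hl0 a1 hsh1'
    obtain ⟨hmono', v', hv0', hvl', hmoves'⟩ := hser'
    have htN : t < N := by have := H.htb; have := H.hbN; omega
    -- the first move's destination
    have hdest : a1.iota ⟨t, htN⟩ = i0 + r := by
      rw [Abacus.hasShape_part_lt hsh1 ⟨t, htN⟩]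
      simp only [PWH.ptn_part, PWH.pw_eq rfl]
      omega
    -- the key inequality i0 < idx' 0 when d > 0
    have hkey : ∀ hd0 : 0 < d, i0 < idx' ⟨0, hd0⟩ := by
      intro hd0
      obtain ⟨t1, htop1, hlt1⟩ := htop' hd0
      have hle : Ptn.top (γc 1) (γc 2) ≤ Ptn.top (γc 0) (γc 1) := htops 0 (by omega)
      have htt : Ptn.top (γc 0) (γc 1) = t + 1 := by rw [hptn]; exact H.top_eq
      have ht1t : (t1 : ℕ) ≤ t := by
        rw [htt] at hle
        have : Ptn.top (γc 1) (γc 2) = (t1 : ℕ) + 1 := htop1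
        omega
      have hmono1 : a1.iota ⟨t, htN⟩ ≤ a1.iota t1 := a1.iota_anti (by
        show (t1 : ℕ) ≤ t
        exact ht1t)
      omega
    set idx : Fin (d + 1) → ℕ := fun j =>
      if h : (j : ℕ) = 0 then i0 else idx' ⟨(j : ℕ) - 1, by have := j.isLt; omega⟩ with hidx
    have hidx0 : ∀ h0 : 0 < d + 1, idx ⟨0, h0⟩ = i0 := fun _ => dif_pos rfl
    have hmono : StrictMono idx := by
      intro j j' hjj
      have hj' := j'.isLt
      have hjlt : (j : ℕ) < (j' : ℕ) := hjj
      by_cases hj : (j : ℕ) = 0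
      · have hd0 : 0 < d := by omega
        simp only [hidx]
        rw [dif_pos hj, dif_neg (by omega : ¬ (j' : ℕ) = 0)]
        calc i0 < idx' ⟨0, hd0⟩ := hkey hd0
          _ ≤ idx' ⟨(j' : ℕ) - 1, by omega⟩ := hmono'.monotone (by
            show (0 : ℕ) ≤ (j' : ℕ) - 1
            omega)
      · simp only [hidx]
        rw [dif_neg hj, dif_neg (by omega : ¬ (j' : ℕ) = 0)]
        exact hmono' (by show (j : ℕ) - 1 < (j' : ℕ) - 1; omega)
    set v : Fin (d + 2) → Abacus N := fun j =>
      if h : (j : ℕ) = 0 then a else v' ⟨(j : ℕ) - 1, by have := j.isLt; omega⟩ with hv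
    have hveq : ∀ (j : Fin (d + 2)) (k : Fin (d + 1)), (j : ℕ) = (k : ℕ) + 1 →
        v j = v' k := by
      intro j k hjk
      simp only [hv]
      rw [dif_neg (by omega)]
      exact congrArg v' (Fin.ext (by simp only; omega))
    refine ⟨a', idx, hsh', ⟨hmono, v, ?_, ?_, ?_⟩, ?_⟩
    · simp [hv]
    · rw [hveq (Fin.last (d + 1)) (Fin.last d) (by simp)]
      exact hvl'
    · intro j
      by_cases hj : (j : ℕ) = 0
      · have hcs : v j.castSucc = a := by
          rw [hv]; simp only
          rw [dif_pos (by simp [Fin.coe_castSucc, hj])]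
        have hsc : v j.succ = a1 := by
          rw [hveq j.succ 0 (by simp [Fin.val_succ, hj])]
          exact hv0'
        have hix : idx j = i0 := by
          simp only [hidx]
          rw [dif_pos hj]
        rw [hcs, hsc, hix]
        have : j = ⟨0, by omega⟩ := Fin.ext hj
        exact hmv1
      · have hjlt := j.isLt
        have hj1 : (j : ℕ) - 1 < d := by omega
        have hcs : v j.castSucc = v' ((⟨(j : ℕ) - 1, hj1⟩ : Fin d).castSucc) := by
          apply hveq
          simp only [Fin.coe_castSucc]
          omega
        have hsc : v j.succ = v' ((⟨(j : ℕ) - 1, hj1⟩ : Fin d).succ) := by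
          apply hveq
          simp only [Fin.val_succ]
          omega
        have hix : idx j = idx' ⟨(j : ℕ) - 1, hj1⟩ := by
          simp only [hidx]
          rw [dif_neg hj]
        rw [hcs, hsc, hix]
        exact hmoves' ⟨(j : ℕ) - 1, hj1⟩
    · intro h0
      refine ⟨⟨t, htN⟩, ?_, ?_⟩
      · rw [hptn]; exact H.top_eq
      · rw [hidx0 h0]
        rw [Abacus.hasShape_part_lt hsh ⟨t, htN⟩]
        have := H.hgt
        simp only
        omega
set_option maxHeartbeats 1000000 in
/-- **Corollary 3.4, (i) ⟺ (ii)**: `λ/μ` is `r`-decomposable if and only if there exist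
labelled abaci `w ∈ Abc_N(μ)`, `w' ∈ Abc_N(λ)` and positions `i_1 < … < i_m` such that `w'`
is obtained from `w` by a series of `r`-moves of beads from positions `i_1, …, i_m`. -/
theorem rdecomposable_iff_series_of_moves (r N : ℕ) (hr : 0 < r) (hN : 0 < N)
    (mu lam : Ptn) (hmu : ∀ i, N ≤ i → mu.part i = 0) (hlam : ∀ i, N ≤ i → lam.part i = 0)
    (hsub : Ptn.Sub mu lam) :
    RDecomposable r mu lam ↔
      ∃ (m : ℕ) (a a' : Abacus N) (idx : Fin m → ℕ),
        a.HasShape mu ∧ a'.HasShape lam ∧ SeriesRMoves r m a a' idx := by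
  constructor
  · rintro ⟨d, γc, hchain⟩
    obtain ⟨a, hsha⟩ := exists_abacus_of_shape mu hmu
    obtain ⟨a', idx, hsh', hser, -⟩ := forward_aux hr hN d mu lam γc hchain hmu hlam a hsha
    exact ⟨d, a, a', idx, hsha, hsh', hser⟩
  · rintro ⟨mm, a, a', idx, hsha, hsha', hmono, v, hv0, hvl, hmoves⟩
    have step : ∀ (j : ℕ) (hj : j < mm) (hj1 : j < mm + 1) (hj2 : j + 1 < mm + 1),
        IsBorderStrip r (Abacus.shapeOf (v ⟨j, hj1⟩)) (Abacus.shapeOf (v ⟨j + 1, hj2⟩)) ∧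
          Ptn.top (Abacus.shapeOf (v ⟨j, hj1⟩)) (Abacus.shapeOf (v ⟨j + 1, hj2⟩)) =
            (((v ⟨j, hj1⟩).suppF.filter (fun s => idx ⟨j, hj⟩ + r < s)).card) + 1 := by
      intro j hj hj1 hj2
      have hmv := hmoves ⟨j, hj⟩
      have e1 : (⟨j, hj⟩ : Fin mm).castSucc = (⟨j, hj1⟩ : Fin (mm + 1)) := Fin.ext rfl
      have e2 : (⟨j, hj⟩ : Fin mm).succ = (⟨j + 1, hj2⟩ : Fin (mm + 1)) := Fin.ext rfl
      rw [e1, e2] at hmv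
      obtain ⟨t, b, g, H, hib, hir, hrel, htt, hshp⟩ :=
        Abacus.params_of_move hr (Abacus.shapeOf_hasShape (v ⟨j, hj1⟩)) hmv
      have hg1 : Abacus.shapeOf (v ⟨j + 1, hj2⟩) = H.ptn :=
        Abacus.hasShape_unique (Abacus.shapeOf_hasShape _) hshp
      rw [hg1]
      exact ⟨H.isBorderStrip hrel, by rw [H.top_eq, htt]⟩
    have hTmono : ∀ (j : ℕ) (hj1 : j < mm) (hj2 : j + 1 < mm)
        (q1 : j < mm + 1) (q2 : j + 1 < mm + 1),
        (((v ⟨j + 1, q2⟩).suppF.filter (fun s => idx ⟨j + 1, hj2⟩ + r < s)).card) ≤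
          (((v ⟨j, q1⟩).suppF.filter (fun s => idx ⟨j, hj1⟩ + r < s)).card) := by
      intro j hj1 hj2 q1 q2
      have hmv := hmoves ⟨j, hj1⟩
      have e1 : (⟨j, hj1⟩ : Fin mm).castSucc = (⟨j, q1⟩ : Fin (mm + 1)) := Fin.ext rfl
      have e2 : (⟨j, hj1⟩ : Fin mm).succ = (⟨j + 1, q2⟩ : Fin (mm + 1)) := Fin.ext rfl
      rw [e1, e2] at hmv
      have hsupp := Abacus.suppF_move hr hmv
      have hij : idx ⟨j, hj1⟩ < idx ⟨j + 1, hj2⟩ := hmono (by rw [Fin.mk_lt_mk]; omega)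
      apply Finset.card_le_card
      intro s hs
      rw [Finset.mem_filter] at hs ⊢
      obtain ⟨hs1, hs2⟩ := hs
      rw [hsupp, Finset.mem_insert, Finset.mem_erase] at hs1
      rcases hs1 with h | h
      · omega
      · exact ⟨h.2, by omega⟩
    refine ⟨mm, fun j => Abacus.shapeOf (v ⟨min j mm, Nat.lt_succ_of_le (min_le_right j mm)⟩),
      ?_, ?_, ?_, ?_⟩
    · show Abacus.shapeOf (v ⟨min 0 mm, _⟩) = mu
      have e0 : (⟨min 0 mm, Nat.lt_succ_of_le (min_le_right 0 mm)⟩ : Fin (mm + 1)) = 0 :=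
        Fin.ext (by simp)
      rw [e0, hv0]
      exact Abacus.hasShape_unique (Abacus.shapeOf_hasShape a) hsha
    · show Abacus.shapeOf (v ⟨min mm mm, _⟩) = lam
      have el : (⟨min mm mm, Nat.lt_succ_of_le (min_le_right mm mm)⟩ : Fin (mm + 1))
          = Fin.last mm := Fin.ext (by simp)
      rw [el, hvl]
      exact Abacus.hasShape_unique (Abacus.shapeOf_hasShape a') hsha'
    · intro i hi
      show IsBorderStrip r (Abacus.shapeOf (v ⟨min i mm, _⟩))
        (Abacus.shapeOf (v ⟨min (i + 1) mm, _⟩))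
      have q1 : i < mm + 1 := by omega
      have q2 : i + 1 < mm + 1 := by omega
      have ei : (⟨min i mm, Nat.lt_succ_of_le (min_le_right i mm)⟩ : Fin (mm + 1))
          = ⟨i, q1⟩ := Fin.ext (by simp; omega)
      have ei1 : (⟨min (i + 1) mm, Nat.lt_succ_of_le (min_le_right (i + 1) mm)⟩ : Fin (mm + 1))
          = ⟨i + 1, q2⟩ := Fin.ext (by simp; omega)
      rw [ei, ei1]
      exact (step i hi q1 q2).1
    · intro i hi
      have hi1 : i < mm := by omega
      have q1 : i < mm + 1 := by omega
      have q2 : i + 1 < mm + 1 := by omega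
      have q3 : i + 2 < mm + 1 := by omega
      show Ptn.top (Abacus.shapeOf (v ⟨min (i + 1) mm, _⟩))
          (Abacus.shapeOf (v ⟨min (i + 2) mm, _⟩)) ≤
        Ptn.top (Abacus.shapeOf (v ⟨min i mm, _⟩))
          (Abacus.shapeOf (v ⟨min (i + 1) mm, _⟩))
      have ei : (⟨min i mm, Nat.lt_succ_of_le (min_le_right i mm)⟩ : Fin (mm + 1))
          = ⟨i, q1⟩ := Fin.ext (by simp; omega)
      have ei1 : (⟨min (i + 1) mm, Nat.lt_succ_of_le (min_le_right (i + 1) mm)⟩ : Fin (mm + 1))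
          = ⟨i + 1, q2⟩ := Fin.ext (by simp; omega)
      have ei2 : (⟨min (i + 2) mm, Nat.lt_succ_of_le (min_le_right (i + 2) mm)⟩ : Fin (mm + 1))
          = ⟨i + 2, q3⟩ := Fin.ext (by simp; omega)
      rw [ei, ei1, ei2]
      have h1 := (step i hi1 q1 q2).2
      have h2 : Ptn.top (Abacus.shapeOf (v ⟨i + 1, q2⟩)) (Abacus.shapeOf (v ⟨i + 2, q3⟩)) =
          (((v ⟨i + 1, q2⟩).suppF.filter (fun s => idx ⟨i + 1, hi⟩ + r < s)).card) + 1 :=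
        (step (i + 1) hi q2 q3).2
      have h3 := hTmono i hi1 hi q1 q2
      omega
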